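/- arXiv:1807.00474 — 4 statements merged into one kernel-verified Lean document; each statement's English description precedes it below -/
import Mathlib

section
/- Let P₀, P₁, Q be positive reals and β a real number with β²·Q < P₀, and set P₀' := P₀ − β²·Q. With α₁ := (1+β)·P₀'/(P₀'+1), the function f from the Gaussian inner bound satisfies the closed form f(α₁, β, P₁) = (1/2)·log(1 + P₁/(P₀ + Q + 2·β·Q + 1)) + (1/2)·log(1 + P₀ − β²·Q). -/
/-!
With `A := P₀'` the optimal coefficient `α₁ = (1+β)A/(A+1)` satisfies `α₁ - (1+β) = -(1+β)/(A+1)`,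
so the denominator of the argument of `f` collapses to `A·S/(A+1)` with
`S := A + 1 + (1+β)²Q = P₀ + Q + 2βQ + 1`, while the numerator is `A·(S + P₁)`.
The argument is therefore `(1 + P₁/S)(1 + A)`, and the logarithm splits.
-/

/-- The rate function `f` from the Gaussian inner bound (Proposition 2.2.3) for the
state-dependent Gaussian MAC with a helper, with `P₀' := P₀ - β^2*Q`. -/
noncomputable def f (P₀ Q α β P : ℝ) : ℝ :=
  (1/2) * Real.log ((P₀ - β^2*Q) * ((P₀ - β^2*Q) + (1+β)^2*Q + P + 1) /
    ((P₀ - β^2*Q) * Q * (α - 1 - β)^2 + (P₀ - β^2*Q) + α^2*Q))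

lemma denom_eq_of_alpha_opt (A Q b : ℝ) (hA1 : A + 1 ≠ 0) :
    A * Q * (b * A / (A + 1) - b) ^ 2 + A + (b * A / (A + 1)) ^ 2 * Q =
      A * (A + 1 + b ^ 2 * Q) / (A + 1) := by
  field_simp
  ring

lemma rate_arg_eq_of_alpha_opt (A Q b P : ℝ) (hA : A ≠ 0) (hA1 : A + 1 ≠ 0)
    (hS : A + 1 + b ^ 2 * Q ≠ 0) :
    A * (A + b ^ 2 * Q + P + 1) /
        (A * Q * (b * A / (A + 1) - b) ^ 2 + A + (b * A / (A + 1)) ^ 2 * Q) =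
      (1 + P / (A + 1 + b ^ 2 * Q)) * (1 + A) := by
  rw [denom_eq_of_alpha_opt A Q b hA1]
  field_simp
  ring

theorem stmt_0_general (P₀ P₁ Q β : ℝ) (hP₁ : 0 < P₁) (hQ : 0 < Q)
    (hβ : β^2*Q < P₀) :
    f P₀ Q ((1+β) * (P₀ - β^2*Q) / ((P₀ - β^2*Q) + 1)) β P₁ =
      (1/2) * Real.log (1 + P₁ / (P₀ + Q + 2*β*Q + 1)) +
      (1/2) * Real.log (1 + P₀ - β^2*Q) := by
  have hA : 0 < P₀ - β^2*Q := sub_pos.mpr hβ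
  have hS : 0 < (P₀ - β^2*Q) + 1 + (1+β)^2*Q := by positivity
  have hS_eq : P₀ + Q + 2*β*Q + 1 = (P₀ - β^2*Q) + 1 + (1+β)^2*Q := by ring
  have hgain : 0 < 1 + P₁ / ((P₀ - β^2*Q) + 1 + (1+β)^2*Q) := by positivity
  unfold f
  rw [sub_sub, rate_arg_eq_of_alpha_opt _ _ _ _ hA.ne' (by positivity) hS.ne', hS_eq,
    Real.log_mul hgain.ne' (by positivity), add_sub_assoc]
  ring

/-- with `α₁ := (1+β)·P₀'/(P₀'+1)`, the function `f` has the stated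
closed form. -/
theorem stmt_0 (P₀ P₁ Q β : ℝ) (hP₀ : 0 < P₀) (hP₁ : 0 < P₁) (hQ : 0 < Q)
    (hβ : β^2*Q < P₀) :
    f P₀ Q ((1+β) * (P₀ - β^2*Q) / ((P₀ - β^2*Q) + 1)) β P₁ =
      (1/2) * Real.log (1 + P₁ / (P₀ + Q + 2*β*Q + 1)) +
      (1/2) * Real.log (1 + P₀ - β^2*Q) :=
  stmt_0_general P₀ P₁ Q β hP₁ hQ hβ
end

section
/- Let P₀, P₁, Q be positive reals and β a real number with β²·Q < P₀, and set P₀' := P₀ − β²·Q. Then α₁ := (1+β)·P₀'/(P₀'+1) maximizes f(·, β, P₁) over all real α; that is, for every real α, f(α, β, P₁) ≤ f(α₁, β, P₁). -/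
/-- `α₁ := (1+β)·P₀'/(P₀'+1)` maximizes `f(·, β, P₁)` over all real `α`. -/
theorem stmt_1 (P₀ P₁ Q β : ℝ) (hP₀ : 0 < P₀) (hP₁ : 0 < P₁) (hQ : 0 < Q)
    (hβ : β^2*Q < P₀) (α : ℝ) :
    f P₀ Q α β P₁ ≤ f P₀ Q ((1+β) * (P₀ - β^2*Q) / ((P₀ - β^2*Q) + 1)) β P₁ := by
  set s : ℝ := P₀ - β^2*Q with hs
  have hs0 : 0 < s := by simp [hs]; linarith
  set α₁ : ℝ := (1+β) * s / (s + 1) with hα₁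
  have hN : 0 < s * (s + (1+β)^2*Q + P₁ + 1) := by positivity
  have hD : ∀ a : ℝ, 0 < s * Q * (a - 1 - β)^2 + s + a^2*Q := by
    intro a; positivity
  have hDle : s * Q * (α₁ - 1 - β)^2 + s + α₁^2*Q ≤
      s * Q * (α - 1 - β)^2 + s + α^2*Q := by
    have hs1 : (0:ℝ) < s + 1 := by linarith
    have key : s * Q * (α - 1 - β)^2 + s + α^2*Q -
        (s * Q * (α₁ - 1 - β)^2 + s + α₁^2*Q) =
        Q * (α*(s+1) - (1+β)*s)^2 / (s+1) := by
      rw [hα₁]; field_simp; ring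
    have h0 : 0 ≤ Q * (α*(s+1) - (1+β)*s)^2 / (s+1) := by positivity
    clear_value s α₁
    linarith [key, h0]
  unfold f
  rw [← hs]
  gcongr (1/2) * Real.log ?_
  exact div_le_div_of_nonneg_left hN.le (hD α₁) hDle
end

section
/- Let P₁, Q be reals with P₁ > 0, Q ≥ 0, and let α be a real number such that P₀' := P₀ − (α−1)²·Q > 0. Then g(α, α−1, P₁) ≤ f(α, α−1, P₁) if and only if P₀'² ≥ α²·Q·(P₁ + 1 − P₀'). -/
/-- The rate function `g` from the Gaussian inner bound (Proposition 2.2.3). -/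
noncomputable def g (P₀ Q α β P : ℝ) : ℝ :=
  (1/2) * Real.log (1 + P * ((P₀ - β^2*Q) + α^2*Q) /
    ((P₀ - β^2*Q) * Q * (α - 1 - β)^2 + (P₀ - β^2*Q) + α^2*Q))

/-!
For `β = α - 1` the term `(α - 1 - β)²` vanishes, so both rates share the denominator
`P₀' + α²Q`, and `g` collapses to `½ log (1 + P₁)`. Comparing the (positive) arguments of
the logarithms and clearing that denominator, the terms linear in `P₁` cancel and what is
left is `α²Q (P₁ + 1 - P₀') ≤ P₀'²`.
-/

lemma f_at_sub_one (P₀ Q α P : ℝ) :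
    f P₀ Q α (α - 1) P = (1/2) * Real.log ((P₀ - (α - 1)^2*Q) *
      ((P₀ - (α - 1)^2*Q) + α^2*Q + P + 1) / ((P₀ - (α - 1)^2*Q) + α^2*Q)) := by
  unfold f
  rw [add_sub_cancel, sub_self, zero_pow two_ne_zero, mul_zero, zero_add]

lemma g_at_sub_one (P₀ Q α P : ℝ) (h : P₀ - (α - 1)^2*Q + α^2*Q ≠ 0) :
    g P₀ Q α (α - 1) P = (1/2) * Real.log (1 + P) := by
  unfold g
  rw [sub_self, zero_pow two_ne_zero, mul_zero, zero_add, mul_div_assoc, div_self h, mul_one]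

lemma one_add_le_mul_div_iff {p c P : ℝ} (hD : 0 < p + c) :
    1 + P ≤ p * (p + c + P + 1) / (p + c) ↔ c * (P + 1 - p) ≤ p^2 := by
  rw [le_div_iff₀ hD]
  constructor <;> intro h <;> linarith

/-- with `β = α - 1` and `P₀' := P₀ - (α-1)²·Q > 0`,
`g(α, α−1, P₁) ≤ f(α, α−1, P₁)` iff `P₀'² ≥ α²·Q·(P₁ + 1 − P₀')`. -/
theorem stmt_3 (P₁ Q P₀ α : ℝ) (hP₁ : 0 < P₁) (hQ : 0 ≤ Q)
    (hP₀' : 0 < P₀ - (α - 1)^2*Q) :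
    g P₀ Q α (α - 1) P₁ ≤ f P₀ Q α (α - 1) P₁ ↔
      (P₀ - (α - 1)^2*Q)^2 ≥ α^2*Q*(P₁ + 1 - (P₀ - (α - 1)^2*Q)) := by
  set P' := P₀ - (α - 1)^2*Q
  have hD : 0 < P' + α^2*Q := by positivity
  rw [g_at_sub_one P₀ Q α P₁ hD.ne', f_at_sub_one, mul_le_mul_iff_of_pos_left one_half_pos,
    Real.log_le_log_iff (by linarith) (by positivity), one_add_le_mul_div_iff hD, ge_iff_le]
end

section
/- Let P₂, Q₂ > 0 with Q₂ > (1+P₂)/P₂, let P₁, Q₁' ≥ 0 and d be real, and set β := P₂/(P₂+1). Then for all sufficiently large a, (P₁ + a²·P₂ + d²·Q₂ + Q₁' + 1) / ((d + a·β)²·Q₂·P₂ + (P₂ + β²·Q₂)·(P₁ + Q₁' + 1)) < (P₂+1)/P₂; i.e., the very strong regime full-cancellation condition of Theorem 3.2.2 fails for all sufficiently large interference gain a. -/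
open Filter

/-! Write the left-hand side as `N / D`. Then `(P₂+1)·D - P₂·N` is a quadratic in `a` with
leading coefficient `(P₂+1)β²Q₂P₂ - P₂² = P₂²(Q₂P₂ - P₂ - 1)/(P₂+1)`, positive exactly when
`Q₂ > (1+P₂)/P₂`. So for large `a` it is positive, as is `N` (leading coefficient `P₂`),
and hence also `D`. -/

theorem tendsto_atTop_quadratic {c : ℝ} (b e : ℝ) (hc : 0 < c) :
    Tendsto (fun x : ℝ => c * x ^ 2 + b * x + e) atTop atTop := by
  have h : Tendsto (fun x : ℝ => x * (c * x + b)) atTop atTop :=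
    tendsto_id.atTop_mul_atTop₀
      (tendsto_atTop_add_const_right _ b (tendsto_id.const_mul_atTop hc))
  exact (tendsto_atTop_add_const_right _ e h).congr fun x => by ring

theorem div_lt_div_of_mul_lt_mul {K : Type*} [Field K] [LinearOrder K] [IsStrictOrderedRing K]
    {n m p q : K} (hn : 0 < n) (hp : 0 < p) (hq : 0 < q) (h : q * n < p * m) :
    n / m < p / q := by
  have hm : 0 < m := pos_of_mul_pos_right ((mul_pos hq hn).trans h) hp.le
  rw [div_lt_div_iff₀ hm hq]
  linarith

theorem stmt_12_general (P₂ Q₂ P₁ Q₁' d : ℝ) (hP₂ : 0 < P₂)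
    (hQ₂big : Q₂ > (1 + P₂)/P₂) :
    ∀ᶠ a : ℝ in atTop,
      (P₁ + a^2*P₂ + d^2*Q₂ + Q₁' + 1) /
          ((d + a*(P₂/(P₂+1)))^2*Q₂*P₂ +
            (P₂ + (P₂/(P₂+1))^2*Q₂)*(P₁ + Q₁' + 1)) < (P₂+1)/P₂ := by
  set β := P₂ / (P₂ + 1)
  have hc : 0 < P₂ ^ 2 * (Q₂ * P₂ - P₂ - 1) / (P₂ + 1) := by
    have : 1 + P₂ < Q₂ * P₂ := (div_lt_iff₀ hP₂).mp hQ₂big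
    have : 0 < Q₂ * P₂ - P₂ - 1 := by linarith
    positivity
  set e := (P₂ + 1) * d ^ 2 * Q₂ * P₂ + (P₂ + 1) * (P₂ + β ^ 2 * Q₂) * (P₁ + Q₁' + 1)
    - P₂ * (P₁ + d ^ 2 * Q₂ + Q₁' + 1)
  have hgap_eq : ∀ a : ℝ,
      (P₂ + 1) * ((d + a * β) ^ 2 * Q₂ * P₂ + (P₂ + β ^ 2 * Q₂) * (P₁ + Q₁' + 1))
        - P₂ * (P₁ + a ^ 2 * P₂ + d ^ 2 * Q₂ + Q₁' + 1)
      = P₂ ^ 2 * (Q₂ * P₂ - P₂ - 1) / (P₂ + 1) * a ^ 2 + 2 * d * P₂ ^ 2 * Q₂ * a + e := by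
    intro a
    simp only [e, β]
    field_simp
    ring
  filter_upwards
    [(tendsto_atTop_quadratic 0 (P₁ + d ^ 2 * Q₂ + Q₁' + 1) hP₂).eventually_gt_atTop 0,
     (tendsto_atTop_quadratic (2 * d * P₂ ^ 2 * Q₂) e hc).eventually_gt_atTop 0]
    with a hN hgap
  refine div_lt_div_of_mul_lt_mul (by linarith) (by linarith) hP₂ ?_
  linarith [hgap_eq a]

/-- if `Q₂ > (1+P₂)/P₂`, then for all sufficiently large `a` the
very strong regime full-cancellation condition of Theorem 3.2.2 fails, i.e. the
left-hand side drops below `(P₂+1)/P₂`. -/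
theorem stmt_12 (P₂ Q₂ P₁ Q₁' d : ℝ) (hP₂ : 0 < P₂) (hQ₂ : 0 < Q₂)
    (hQ₂big : Q₂ > (1 + P₂)/P₂) (hP₁ : 0 ≤ P₁) (hQ₁' : 0 ≤ Q₁') :
    ∀ᶠ a : ℝ in atTop,
      (P₁ + a^2*P₂ + d^2*Q₂ + Q₁' + 1) /
          ((d + a*(P₂/(P₂+1)))^2*Q₂*P₂ +
            (P₂ + (P₂/(P₂+1))^2*Q₂)*(P₁ + Q₁' + 1)) < (P₂+1)/P₂ :=
  stmt_12_general P₂ Q₂ P₁ Q₁' d hP₂ hQ₂big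
end
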